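/- arXiv:1707.05661 — 5 statements merged into one kernel-verified Lean document; each statement's English description precedes it below -/
import Mathlib

section
/- There is no minimal separable linear order of cardinality continuum: for every separable linear order L of cardinality 2^ℵ₀ there is a suborder S ⊆ L of cardinality 2^ℵ₀ such that L does not order-embed into S (with the induced order). -/
/-- A linear order is separable if it has a countable subset `D` such that between
any two points which have some point strictly between them, there is a point of `D`. -/
def SeparableOrder (α : Type*) [LinearOrder α] : Prop :=
  ∃ D : Set α, D.Countable ∧
    ∀ x y : α, x < y → (∃ z : α, x < z ∧ z < y) → ∃ d ∈ D, x < d ∧ d < y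

open Cardinal Set

/-!
Fix a countable `D` witnessing separability. For a strictly monotone `f : L → L`, the value `f x`
lies in the set of `m` with `f d < m < f d'` for all `d < x < d'` in `D`, which depends only on
`f|D`, and there are only `2^ℵ₀` such restrictions. Separability makes every `m` admissible at
finitely many `x` only, and the admissible set infinite at countably many `x` only. A transfinite
diagonalization of length `2^ℵ₀` over all `g : D → L` then picks for each `g` a point `x_g` with
finite admissible set, together with `2^ℵ₀` points avoiding all these admissible sets; they form
the suborder `S`, and no strictly monotone `f : L → L` takes all its values in `S`.
-/

universe u

theorem exists_recursive_choice {ι β : Type*} [LT ι] [WellFoundedLT ι] [Nonempty β]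
    (Q : ι → β → Prop) (R : ι → β → ι → β → Prop)
    (h : ∀ w (prev : ∀ v, v < w → β), (∀ v hv, Q v (prev v hv)) →
      ∃ b, Q w b ∧ ∀ v hv, R v (prev v hv) w b) :
    ∃ g : ι → β, ∀ w, Q w (g w) ∧ ∀ v < w, R v (g v) w (g w) := by
  let g : ι → β := IsWellFounded.fix (· < ·) fun w prev =>
    Classical.epsilon fun b => Q w b ∧ ∀ v hv, R v (prev v hv) w b
  refine ⟨g, fun w => ?_⟩
  induction w using WellFoundedLT.induction with
  | _ w ih =>
    rw [show g w = _ from IsWellFounded.fix_eq _ _ w]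
    exact Classical.epsilon_spec (h w _ fun v hv => (ih v hv).1)

theorem Set.Infinite.exists_lt_lt {α : Type*} [LinearOrder α] {s : Set α} (hs : s.Infinite) :
    ∃ x ∈ s, ∃ y ∈ s, ∃ z ∈ s, x < y ∧ y < z := by
  obtain ⟨t, hts, ht⟩ := hs.exists_subset_card_eq 3
  have mem (i : Fin 3) : t.orderEmbOfFin ht i ∈ s := hts (t.orderEmbOfFin_mem ht i)
  exact ⟨_, mem 0, _, mem 1, _, mem 2, (t.orderEmbOfFin ht).strictMono (by decide),
    (t.orderEmbOfFin ht).strictMono (by decide)⟩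

namespace Cardinal

theorem mk_union_lt {α : Type u} {κ : Cardinal} (hκ : ℵ₀ ≤ κ) {A B : Set α}
    (hA : #A < κ) (hB : #B < κ) : #(A ∪ B : Set α) < κ :=
  (mk_union_le A B).trans_lt (add_lt_of_lt hκ hA hB)

theorem mk_iUnion_lt_of_finite {α ι : Type u} {κ : Cardinal} (hκ : ℵ₀ < κ) {f : ι → Set α}
    (hι : #ι < κ) (hf : ∀ i, (f i).Finite) : #(⋃ i, f i) < κ :=
  (mk_iUnion_le f).trans_lt <| mul_lt_of_lt hκ.le hι <|
    (ciSup_le' fun i => (hf i).lt_aleph0.le).trans_lt hκ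

end Cardinal

theorem exists_diagonalization_step {α ι : Type u} (hα : ℵ₀ < #α) (hι : #ι < #α) (c : α → Set α)
    (hfiber : ∀ m, {x | m ∈ c x}.Finite) (hinf : #{x | (c x).Infinite} < #α)
    (prev : ι → α × α) (cprev : ι → Set α) (hprev : ∀ v, (cprev v).Finite) :
    ∃ x k, (c x).Finite ∧ k ∉ c x ∧ ∀ v, (prev v).2 ∉ c x ∧ k ≠ (prev v).2 ∧ k ∉ cprev v := by
  set K := range fun v => (prev v).2
  have hK : #K < #α := mk_range_le.trans_lt hι
  obtain ⟨x, hx⟩ := compl_nonempty_of_mk_lt_mk <|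
    mk_union_lt hα.le hinf (mk_iUnion_lt_of_finite hα hK fun k => hfiber k)
  simp only [mem_compl_iff, mem_union, mem_iUnion, mem_ofPred_eq, not_or, not_exists] at hx
  have hx_fin : (c x).Finite := not_infinite.1 hx.1
  obtain ⟨k, hk⟩ := compl_nonempty_of_mk_lt_mk <|
    mk_union_lt hα.le (mk_union_lt hα.le hK (mk_iUnion_lt_of_finite hα hι hprev))
      (hx_fin.lt_aleph0.trans hα)
  simp only [mem_compl_iff, mem_union, mem_iUnion, not_or, not_exists] at hk
  exact ⟨x, k, hx_fin, hk.2, fun v => ⟨hx.2 ⟨_, v, rfl⟩, fun h => hk.1.1 (h ▸ mem_range_self v),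
    hk.1.2 v⟩⟩

theorem exists_mk_eq_forall_exists_disjoint {α I : Type u} (hα : ℵ₀ < #α) (hI : #I ≤ #α)
    (C : I → α → Set α) (hfiber : ∀ i m, {x | m ∈ C i x}.Finite)
    (hinf : ∀ i, #{x | (C i x).Infinite} < #α) :
    ∃ S : Set α, #S = #α ∧ ∀ i, ∃ x, Disjoint (C i x) S := by
  rcases isEmpty_or_nonempty I with _ | _
  · exact ⟨univ, mk_univ, isEmptyElim⟩
  have : Nonempty α := mk_ne_zero_iff.1 (aleph0_pos.trans hα).ne'
  obtain ⟨s, hs⟩ : ∃ s : (#α).ord.ToType → I, s.Surjective :=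
    Function.exists_surjective_iff.2 ⟨inferInstance, by rwa [← le_def, mk_ord_toType]⟩
  -- `p w = (x_w, k_w)`: `C (s w) x_w` is finite and misses every earlier `k_v`, while `k_w` is new
  -- and lies outside `C (s v) x_v` for all `v ≤ w`.
  obtain ⟨p, hp⟩ := exists_recursive_choice (β := α × α)
    (fun w p => (C (s w) p.1).Finite ∧ p.2 ∉ C (s w) p.1)
    (fun v q w p => q.2 ∉ C (s w) p.1 ∧ p.2 ≠ q.2 ∧ p.2 ∉ C (s v) q.1) fun w prev hprev => by
      obtain ⟨x, k, hx, hk, hxk⟩ := exists_diagonalization_step hα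
        (by simpa using mk_Iio_lt w) (C (s w))
        (hfiber (s w)) (hinf (s w)) (fun v : Iio w => prev v v.2)
        (fun v => C (s v) (prev v v.2).1) fun v => (hprev v v.2).1
      exact ⟨(x, k), ⟨hx, hk⟩, fun v hv => hxk ⟨v, hv⟩⟩
  have hp_inj : Function.Injective fun w => (p w).2 := by
    intro v w h
    rcases lt_trichotomy v w with hvw | rfl | hwv
    · exact absurd h.symm ((hp w).2 v hvw).2.1
    · rfl
    · exact absurd h ((hp v).2 w hwv).2.1
  refine ⟨range fun w => (p w).2, by rw [mk_range_eq _ hp_inj, mk_ord_toType], fun i => ?_⟩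
  obtain ⟨w, rfl⟩ := hs i
  refine ⟨(p w).1, disjoint_left.2 ?_⟩
  rintro _ hm ⟨v, rfl⟩
  rcases lt_trichotomy v w with hvw | rfl | hwv
  · exact ((hp w).2 v hvw).1 hm
  · exact (hp v).1.2 hm
  · exact ((hp v).2 w hwv).2.2 hm

section Admissible

variable {L : Type*} [LinearOrder L]

def admissibleValues (D : Set L) (g : D → L) (x : L) : Set L :=
  {m | (∀ d : D, (d : L) < x → g d < m) ∧ ∀ d : D, x < d → m < g d}

theorem StrictMono.apply_mem_admissibleValues {f : L → L} (hf : StrictMono f) (D : Set L)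
    (x : L) : f x ∈ admissibleValues D (fun d => f d) x :=
  ⟨fun _ h => hf h, fun _ h => hf h⟩

theorem ordConnected_admissibleValues (D : Set L) (g : D → L) (x : L) :
    (admissibleValues D g x).OrdConnected :=
  ⟨fun _ ha _ hb _ hm => ⟨fun d hd => (ha.1 d hd).trans_le hm.1,
    fun d hd => hm.2.trans_lt (hb.2 d hd)⟩⟩

theorem finite_setOf_mem_admissibleValues {D : Set L}
    (hD : ∀ x y : L, x < y → (∃ z, x < z ∧ z < y) → ∃ d ∈ D, x < d ∧ d < y) (g : D → L) (m : L) :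
    {x | m ∈ admissibleValues D g x}.Finite := by
  refine not_infinite.1 fun h => ?_
  obtain ⟨x, hx, y, -, z, hz, hxy, hyz⟩ := h.exists_lt_lt
  obtain ⟨d, hd, hxd, hdz⟩ := hD x z (hxy.trans hyz) ⟨y, hxy, hyz⟩
  exact (hx.2 ⟨d, hd⟩ hxd).asymm (hz.1 ⟨d, hd⟩ hdz)

theorem countable_setOf_infinite_admissibleValues {D : Set L}
    (hD : ∀ x y : L, x < y → (∃ z, x < z ∧ z < y) → ∃ d ∈ D, x < d ∧ d < y)
    (hDc : D.Countable) (g : D → L) :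
    {x | (admissibleValues D g x).Infinite}.Countable := by
  refine (hDc.biUnion fun d _ => (finite_setOf_mem_admissibleValues hD g d).countable).mono ?_
  intro x hx
  obtain ⟨u, hu, v, -, t, ht, huv, hvt⟩ := hx.exists_lt_lt
  obtain ⟨d, hd, hud, hdt⟩ := hD u t (huv.trans hvt) ⟨v, huv, hvt⟩
  exact mem_biUnion hd ((ordConnected_admissibleValues D g x).out hu ht ⟨hud.le, hdt.le⟩)

end Admissible

/-- There is no minimal separable linear order of cardinality continuum: every separable
linear order of cardinality `2^ℵ₀` has a suborder of cardinality `2^ℵ₀` into which it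
does not order-embed. -/
theorem no_minimal_separable_continuum (L : Type*) [LinearOrder L]
    (hsep : SeparableOrder L) (hcard : Cardinal.mk L = 2 ^ Cardinal.aleph0) :
    ∃ S : Set L, Cardinal.mk S = 2 ^ Cardinal.aleph0 ∧ IsEmpty (L ↪o S) := by
  obtain ⟨D, hDc, hD⟩ := hsep
  have hL : ℵ₀ < #L := hcard ▸ cantor ℵ₀
  have hfun : #(D → L) ≤ #L := calc
    #(D → L) = #L ^ #D := (power_def L D).symm
    _ ≤ #L ^ ℵ₀ := power_le_power_left (aleph0_pos.trans hL).ne' (le_aleph0_iff_set_countable.2 hDc)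
    _ = #L := by rw [hcard, ← power_mul, aleph0_mul_aleph0]
  obtain ⟨S, hS, hdisj⟩ := exists_mk_eq_forall_exists_disjoint hL hfun (admissibleValues D)
    (finite_setOf_mem_admissibleValues hD) fun g =>
      (le_aleph0_iff_set_countable.2
        (countable_setOf_infinite_admissibleValues hD hDc g)).trans_lt hL
  refine ⟨S, hS.trans hcard, ⟨fun e => ?_⟩⟩
  have he : StrictMono fun x => (e x : L) := fun _ _ h => e.strictMono h
  obtain ⟨x, hx⟩ := hdisj fun d => (e d : L)
  exact hx.notMem_of_mem_left (he.apply_mem_admissibleValues D x) (e x).2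
end

section
/- Assume the Continuum Hypothesis, i.e., 2^ℵ₀ = ℵ₁. Then there is no minimal uncountable linear order which is separable: every separable uncountable linear order L has an uncountable suborder into which L does not order-embed. -/
open Cardinal Set
universe u v

section Aux

lemma CH_transfer (CH : (2 : Cardinal.{v}) ^ Cardinal.aleph0 = Cardinal.aleph 1) :
    (2 : Cardinal.{u}) ^ Cardinal.aleph0 = Cardinal.aleph 1 := by
  have h1 : Cardinal.lift.{u, v} ((2 : Cardinal.{v}) ^ Cardinal.aleph0) =
      Cardinal.lift.{u, v} (Cardinal.aleph 1) := by rw [CH]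
  have h2 : Cardinal.lift.{v, u} ((2 : Cardinal.{u}) ^ Cardinal.aleph0) =
      Cardinal.lift.{v, u} (Cardinal.aleph 1) := by
    rw [Cardinal.lift_power, Cardinal.lift_aleph0, Cardinal.lift_aleph] at h1 ⊢
    rw [Cardinal.lift_ofNat, Ordinal.lift_one] at h1 ⊢
    exact h1
  exact Cardinal.lift_injective h2
variable {L : Type u} [LinearOrder L] (D : Set L)
def cutD (x : L) : Set L := {d | d ∈ D ∧ d < x}
def Gset (h : L → L) (x : L) : Set L :=
  {w | (∀ d ∈ D, d < x → h d < w) ∧ (∀ d ∈ D, x < d → w < h d)}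

lemma Gset_disjoint {h : L → L} {x y w : L} (hx : x ∉ D) (hy : y ∉ D)
    (hwx : w ∈ Gset D h x) (hwy : w ∈ Gset D h y) : cutD D x = cutD D y := by
  by_contra hne
  rw [Set.ext_iff] at hne
  push_neg at hne
  obtain ⟨d, hd⟩ := hne
  rcases hd with ⟨hdx, hdy⟩ | ⟨hdx, hdy⟩
  · -- d ∈ cutD D x, d ∉ cutD D y
    have hdD : d ∈ D := hdx.1
    have hyd : y < d := by
      rcases lt_trichotomy d y with h1 | h1 | h1
      · exact absurd ⟨hdD, h1⟩ hdy
      · exact absurd (h1 ▸ hdD) hy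
      · exact h1
    exact absurd (hwx.1 d hdD hdx.2) (not_lt.mpr (hwy.2 d hdD hyd).le)
  · have hdD : d ∈ D := hdy.1
    have hxd : x < d := by
      rcases lt_trichotomy d x with h1 | h1 | h1
      · exact absurd ⟨hdD, h1⟩ hdx
      · exact absurd (h1 ▸ hdD) hx
      · exact h1
    exact absurd (hwy.1 d hdD hdy.2) (not_lt.mpr (hwx.2 d hdD hxd).le)

def L0 : Set L := {x | x ∉ D ∧ ∀ y, y < x → cutD D y ≠ cutD D x}

lemma L0_jump {z z' : L} (hzz : z < z') (hmid : ¬ ∃ w, z < w ∧ w < z')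
    (hz : z ∈ L0 D) (hz' : z' ∈ L0 D) : False := by
  have hsub : cutD D z ⊆ cutD D z' := fun d hd => ⟨hd.1, hd.2.trans hzz⟩
  have hne : cutD D z ≠ cutD D z' := hz'.2 z hzz
  obtain ⟨d, hd', hdz⟩ := Set.exists_of_ssubset (ssubset_of_ne_of_subset hne hsub)
  have hzd : z ≤ d := not_lt.mp (fun h => hdz ⟨hd'.1, h⟩)
  rcases hzd.lt_or_eq with h1 | h1
  · exact hmid ⟨d, h1, hd'.2⟩
  · exact hz.1 (h1 ▸ hd'.1)

def fatP (h : L → L) (x : L) : Prop :=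
  ∃ z₁ z₂ z₃, z₁ < z₂ ∧ z₂ < z₃ ∧ z₁ ∈ Gset D h x ∧ z₂ ∈ Gset D h x ∧ z₃ ∈ Gset D h x

variable (hD : ∀ x y : L, x < y → (∃ z : L, x < z ∧ z < y) → ∃ d ∈ D, x < d ∧ d < y)

lemma Gset_convex' {h : L → L} {x z z' w : L} (hz : z ∈ Gset D h x) (hz' : z' ∈ Gset D h x)
    (h1 : z < w) (h2 : w < z') : w ∈ Gset D h x :=
  ⟨fun d hd hdx => (hz.1 d hd hdx).trans h1, fun d hd hxd => h2.trans (hz'.2 d hd hxd)⟩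

lemma Gset_congr {h g : L → L} (hhg : ∀ d ∈ D, h d = g d) (x : L) :
    Gset D h x = Gset D g x := by
  ext w
  constructor <;> rintro ⟨h1, h2⟩ <;> refine ⟨fun d hd hdx => ?_, fun d hd hxd => ?_⟩
  · rw [← hhg d hd]; exact h1 d hd hdx
  · rw [← hhg d hd]; exact h2 d hd hxd
  · rw [hhg d hd]; exact h1 d hd hdx
  · rw [hhg d hd]; exact h2 d hd hxd

lemma mem_Gset_self {f : L → L} (hf : StrictMono f) (x : L) : f x ∈ Gset D f x :=
  ⟨fun _ _ hdx => hf hdx, fun _ _ hxd => hf hxd⟩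

include hD

lemma thin_unique {h : L → L} {x z z' : L} (hx : x ∉ D) (hfat : ¬ fatP D h x)
    (hz : z ∈ Gset D h x) (hz' : z' ∈ Gset D h x)
    (hz0 : z ∈ L0 D) (hz0' : z' ∈ L0 D) : z = z' := by
  by_contra hne
  rcases lt_or_gt_of_ne hne with hlt | hlt
  · rcases Classical.em (∃ w, z < w ∧ w < z') with ⟨w, hw1, hw2⟩ | hmid
    · exact hfat ⟨z, w, z', hw1, hw2, hz, Gset_convex' D hz hz' hw1 hw2, hz'⟩
    · exact L0_jump D hlt hmid hz0 hz0'
  · rcases Classical.em (∃ w, z' < w ∧ w < z) with ⟨w, hw1, hw2⟩ | hmid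
    · exact hfat ⟨z', w, z, hw1, hw2, hz', Gset_convex' D hz' hz hw1 hw2, hz⟩
    · exact L0_jump D hlt hmid hz0' hz0

lemma three_cut {x y z : L} (hxy : x < y) (hyz : y < z) (h : cutD D x = cutD D z) : False := by
  obtain ⟨d, hdD, hxd, hdz⟩ := hD x z (hxy.trans hyz) ⟨y, hxy, hyz⟩
  have : d ∈ cutD D z := ⟨hdD, hdz⟩
  rw [← h] at this
  exact absurd this.2 (not_lt.mpr hxd.le)

lemma card_le_aleph1 (hDc : D.Countable) (hL : Nonempty L)
    (CH : (2 : Cardinal.{u}) ^ Cardinal.aleph0 = Cardinal.aleph 1) :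
    Cardinal.mk L ≤ Cardinal.aleph 1 := by
  have hinj : Function.Injective (fun x : L =>
      ((Subtype.val ⁻¹' cutD D x : Set D), (∃ y, y < x ∧ cutD D y = cutD D x))) := by
    intro x y hxy
    simp only [Prod.mk.injEq, eq_iff_iff] at hxy
    have hcut : cutD D x = cutD D y := by
      ext d
      constructor <;> intro hd
      · have := hxy.1 ▸ (show (⟨d, hd.1⟩ : D) ∈ (Subtype.val ⁻¹' cutD D x : Set D) from hd)
        exact this
      · have := hxy.1.symm ▸ (show (⟨d, hd.1⟩ : D) ∈ (Subtype.val ⁻¹' cutD D y : Set D) from hd)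
        exact this
    by_contra hne
    rcases lt_or_gt_of_ne hne with hlt | hlt
    · have hfy : ∃ w, w < y ∧ cutD D w = cutD D y := ⟨x, hlt, hcut⟩
      obtain ⟨w, hw, hwc⟩ := hxy.2.mpr hfy
      exact three_cut D hD hw hlt (hwc.trans hcut)
    · have hfx : ∃ w, w < x ∧ cutD D w = cutD D x := ⟨y, hlt, hcut.symm⟩
      obtain ⟨w, hw, hwc⟩ := hxy.2.mp hfx
      exact three_cut D hD hw hlt (hwc.trans hcut.symm)
  have h1 : Cardinal.mk L ≤ Cardinal.mk (Set D × Prop) := Cardinal.mk_le_of_injective hinj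
  have hD0 : Cardinal.mk D ≤ Cardinal.aleph0 := by
    rw [Cardinal.mk_le_aleph0_iff]; exact hDc.to_subtype
  calc Cardinal.mk L ≤ Cardinal.mk (Set D × Prop) := h1
    _ = (2 ^ Cardinal.mk D) * 2 := by rw [Cardinal.mk_prod, Cardinal.mk_set, Cardinal.mk_Prop]; simp
    _ ≤ (2 ^ Cardinal.aleph0) * (2 ^ Cardinal.aleph0) := by
        apply mul_le_mul'
        · exact Cardinal.power_le_power_left (by norm_num) hD0
        · calc (2:Cardinal) = 2 ^ (1:Cardinal) := (Cardinal.power_one 2).symm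
            _ ≤ 2 ^ Cardinal.aleph0 := Cardinal.power_le_power_left (by norm_num) Cardinal.one_le_aleph0
    _ = 2 ^ (Cardinal.aleph0 + Cardinal.aleph0) := (Cardinal.power_add 2 _ _).symm
    _ = 2 ^ Cardinal.aleph0 := by rw [Cardinal.aleph0_add_aleph0]
    _ = Cardinal.aleph 1 := CH


lemma L0_uncountable (hDc : D.Countable) (hunc : ¬ Countable L) : ¬ (L0 D).Countable := by
  intro hcnt
  apply hunc
  set R : Set L := {x | x ∉ D ∧ x ∉ L0 D} with hR
  have hwit : ∀ x : R, ∃ y : L0 D, (y : L) < (x : L) ∧ cutD D (y : L) = cutD D (x : L) := by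
    rintro ⟨x, hx1, hx2⟩
    simp only [L0, Set.mem_setOf_eq, not_and, not_forall] at hx2
    obtain ⟨y, hy, hyc⟩ := hx2 hx1
    have hyc : cutD D y = cutD D x := not_not.mp hyc
    refine ⟨⟨y, ?_, ?_⟩, hy, hyc⟩
    · intro hyD
      have : y ∈ cutD D x := ⟨hyD, hy⟩
      rw [← hyc] at this
      exact absurd this.2 (lt_irrefl y)
    · intro w hw hwc
      exact three_cut D hD hw hy (hwc.trans hyc)
  choose F h1 h2 using hwit
  have hFinj : Function.Injective F := by
    intro a b heq
    by_contra hne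
    have hne' : (a : L) ≠ (b : L) := fun h => hne (Subtype.ext h)
    have hcab : cutD D (F a : L) = cutD D (F b : L) := by rw [heq]
    rcases lt_or_gt_of_ne hne' with hlt | hlt
    · exact three_cut D hD (h1 a) hlt ((h2 a).symm ▸ (hcab.trans (h2 b)))
    · exact three_cut D hD (h1 b) hlt ((h2 b).symm ▸ (hcab.symm.trans (h2 a)))
  have : Countable (L0 D) := hcnt.to_subtype
  have hRc : R.Countable := Set.countable_coe_iff.mp (Function.Injective.countable hFinj)
  have huniv : (Set.univ : Set L).Countable := by
    have hsub : (Set.univ : Set L) ⊆ D ∪ L0 D ∪ R := by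
      intro x _
      by_cases hx1 : x ∈ D
      · exact Or.inl (Or.inl hx1)
      by_cases hx2 : x ∈ L0 D
      · exact Or.inl (Or.inr hx2)
      · exact Or.inr ⟨hx1, hx2⟩
    exact Set.Countable.mono hsub ((hDc.union hcnt).union hRc)
  exact Set.countable_univ_iff.mp huniv

lemma fat_countable (hDc : D.Countable) (h : L → L) :
    {x : L | x ∉ D ∧ fatP D h x}.Countable := by
  set X := {x : L | x ∉ D ∧ fatP D h x} with hX
  have hwit : ∀ x : X, ∃ d, d ∈ D ∧ d ∈ Gset D h (x : L) := by
    rintro ⟨x, hx1, z₁, z₂, z₃, h12, h23, hg1, _, hg3⟩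
    obtain ⟨d, hdD, hd1, hd3⟩ := hD z₁ z₃ (h12.trans h23) ⟨z₂, h12, h23⟩
    exact ⟨d, hdD, Gset_convex' D hg1 hg3 hd1 hd3⟩
  choose w hw1 hw2 using hwit
  have : Countable X := by
    have hinj : Function.Injective (fun x : X =>
        ((⟨w x, hw1 x⟩ : D), (∃ z, z < (x : L) ∧ cutD D z = cutD D (x : L)))) := by
      intro a b heq
      simp only [Prod.mk.injEq, Subtype.mk.injEq, eq_iff_iff] at heq
      have hcut : cutD D (a : L) = cutD D (b : L) :=
        Gset_disjoint D a.2.1 b.2.1 (hw2 a) (heq.1 ▸ hw2 b)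
      by_contra hne
      have hne' : (a : L) ≠ (b : L) := fun hv => hne (Subtype.ext hv)
      rcases lt_or_gt_of_ne hne' with hlt | hlt
      · obtain ⟨z, hz, hzc⟩ := heq.2.mpr ⟨a, hlt, hcut⟩
        exact three_cut D hD hz hlt (hzc.trans hcut)
      · obtain ⟨z, hz, hzc⟩ := heq.2.mp ⟨b, hlt, hcut.symm⟩
        exact three_cut D hD hz hlt (hzc.trans hcut.symm)
    have : Countable D := hDc.to_subtype
    exact Function.Injective.countable hinj
  exact Set.countable_coe_iff.mp this

omit hD in
lemma CS_card : Cardinal.mk {s : Set (L × L) // s.Countable} ≤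
    Cardinal.mk (ℕ → Option (L × L)) := by
  apply Cardinal.mk_le_of_surjective (f := fun q : ℕ → Option (L × L) =>
    (⟨Option.some ⁻¹' Set.range q, ((Set.countable_range q).preimage
      (Option.some_injective _))⟩ : {s : Set (L × L) // s.Countable}))
  rintro ⟨s, hs⟩
  rcases s.eq_empty_or_nonempty with rfl | hne
  · refine ⟨fun _ => none, ?_⟩
    ext p
    simp [Set.mem_preimage, Set.mem_range]
  · obtain ⟨g, hg⟩ := Set.Countable.exists_eq_range hs hne
    refine ⟨fun n => some (g n), ?_⟩
    apply Subtype.ext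
    simp only [hg]
    ext p
    simp [Set.mem_preimage, Set.mem_range, eq_comm]

omit hD in
lemma aleph1_pow_aleph0 (CH : (2 : Cardinal.{u}) ^ Cardinal.aleph0 = Cardinal.aleph 1) :
    (Cardinal.aleph 1 : Cardinal.{u}) ^ Cardinal.aleph0 = Cardinal.aleph 1 := by
  rw [← CH, ← Cardinal.power_mul, Cardinal.aleph0_mul_aleph0]

lemma emb_count (hDc : D.Countable) (hunc : ¬ Countable L)
    (CH : (2 : Cardinal.{u}) ^ Cardinal.aleph0 = Cardinal.aleph 1) :
    Cardinal.mk {f : L ↪o L // ∀ x, f x ∈ L0 D} ≤ Cardinal.aleph 1 := by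
  have hL : Nonempty L := by
    rcases isEmpty_or_nonempty L with h | h
    · haveI := h
      exact absurd (inferInstance : Countable L) hunc
    · exact h
  have hLcard := card_le_aleph1 D hD hDc hL CH
  set CS := {s : Set (L × L) // s.Countable} with hCS
  set Φ : {f : L ↪o L // ∀ x, f x ∈ L0 D} → (D → L) × CS := fun f =>
    (fun d => f.1 d, ⟨{p : L × L | p.1 ∉ D ∧ fatP D f.1 p.1 ∧ p.2 = f.1 p.1}, by
      apply ((fat_countable D hD hDc f.1).image (fun x => (x, f.1 x))).mono
      rintro ⟨x, y⟩ ⟨hx1, hx2, hy⟩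
      exact ⟨x, ⟨hx1, hx2⟩, by simp only []; rw [← hy]⟩⟩) with hΦ
  have hinj : Function.Injective Φ := by
    intro f g heq
    simp only [hΦ, Prod.mk.injEq, Subtype.mk.injEq] at heq
    have hDeq : ∀ d ∈ D, f.1 d = g.1 d := fun d hd => congrFun heq.1 ⟨d, hd⟩
    have hG : ∀ x, Gset D f.1 x = Gset D g.1 x := Gset_congr D hDeq
    have hfat : ∀ x, fatP D f.1 x ↔ fatP D g.1 x := by
      intro x
      unfold fatP
      rw [hG]
    have : ∀ x, f.1 x = g.1 x := by
      intro x
      by_cases hx : x ∈ D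
      · exact hDeq x hx
      by_cases hf : fatP D f.1 x
      · have hmem : ((x, f.1 x) : L × L) ∈
            {p : L × L | p.1 ∉ D ∧ fatP D f.1 p.1 ∧ p.2 = f.1 p.1} := ⟨hx, hf, rfl⟩
        have hset := congrArg Subtype.val heq.2
        simp only [] at hset
        rw [hset] at hmem
        exact hmem.2.2
      · exact thin_unique D hD hx hf (mem_Gset_self D f.1.strictMono x)
          ((hG x).symm ▸ mem_Gset_self D g.1.strictMono x) (f.2 x) (g.2 x)
    apply Subtype.ext
    exact DFunLike.ext _ _ this
  have h1 : Cardinal.mk {f : L ↪o L // ∀ x, f x ∈ L0 D} ≤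
      Cardinal.mk ((D → L) × CS) := Cardinal.mk_le_of_injective hinj
  have h2 : Cardinal.mk (D → L) ≤ Cardinal.aleph 1 := by
    rw [← Cardinal.power_def]
    calc Cardinal.mk L ^ Cardinal.mk D ≤ Cardinal.aleph 1 ^ Cardinal.mk D :=
          Cardinal.power_le_power_right hLcard
      _ ≤ Cardinal.aleph 1 ^ Cardinal.aleph0 := by
          apply Cardinal.power_le_power_left
          · exact fun h => by simp [h] at *
          · rw [Cardinal.mk_le_aleph0_iff]; exact hDc.to_subtype
      _ = Cardinal.aleph 1 := aleph1_pow_aleph0 CH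
  have h3 : Cardinal.mk CS ≤ Cardinal.aleph 1 := by
    refine le_trans (CS_card (L := L)) ?_
    rw [Cardinal.mk_arrow, Cardinal.mk_option, Cardinal.mk_prod]
    simp only [Cardinal.lift_id, Cardinal.lift_id', Cardinal.mk_nat, Cardinal.lift_aleph0,
      Cardinal.lift_add, Cardinal.lift_mul, Cardinal.lift_one]
    have hprod : Cardinal.mk L * Cardinal.mk L + 1 ≤ Cardinal.aleph 1 := by
      have := mul_le_mul' hLcard hLcard
      rw [Cardinal.mul_eq_self (Cardinal.aleph0_le_aleph 1)] at this
      calc Cardinal.mk L * Cardinal.mk L + 1 ≤ Cardinal.aleph 1 + Cardinal.aleph 1 :=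
            add_le_add this (le_trans (by norm_num) (Cardinal.aleph0_le_aleph 1))
        _ = Cardinal.aleph 1 := Cardinal.add_eq_self (Cardinal.aleph0_le_aleph 1)
    calc (Cardinal.mk L * Cardinal.mk L + 1) ^ Cardinal.aleph0
        ≤ Cardinal.aleph 1 ^ Cardinal.aleph0 := Cardinal.power_le_power_right hprod
      _ = Cardinal.aleph 1 := aleph1_pow_aleph0 CH
  calc Cardinal.mk {f : L ↪o L // ∀ x, f x ∈ L0 D} ≤ Cardinal.mk ((D → L) × CS) := h1
    _ = Cardinal.mk (D → L) * Cardinal.mk CS := by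
        rw [Cardinal.mk_prod, Cardinal.lift_id, Cardinal.lift_id]
    _ ≤ Cardinal.aleph 1 * Cardinal.aleph 1 := mul_le_mul' h2 h3
    _ = Cardinal.aleph 1 := Cardinal.mul_eq_self (Cardinal.aleph0_le_aleph 1)


omit hD in
lemma range_not_countable (hunc : ¬ Countable L) (f : L ↪o L) :
    ¬ (Set.range (f : L → L)).Countable := by
  intro hc
  have : Countable (Set.range (f : L → L)) := hc.to_subtype
  exact hunc (Countable.of_equiv _ (Equiv.ofInjective _ f.injective).symm)

lemma main_aux (hDc : D.Countable) (hunc : ¬ Countable L)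
    (CH : (2 : Cardinal.{u}) ^ Cardinal.aleph0 = Cardinal.aleph 1) :
    ∃ S : Set L, ¬ S.Countable ∧ IsEmpty (L ↪o S) := by
  classical
  rcases isEmpty_or_nonempty {f : L ↪o L // ∀ x, f x ∈ L0 D} with hE | hE
  · refine ⟨L0 D, L0_uncountable D hD hDc hunc, ⟨fun φ => ?_⟩⟩
    exact hE.false ⟨φ.trans (OrderEmbedding.subtype _), fun x => (φ x).2⟩
  · set W := (Cardinal.aleph 1 : Cardinal.{u}).ord.ToType with hW
    have hWcard : Cardinal.mk W = Cardinal.aleph 1 := by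
      rw [hW, Cardinal.mk_toType, Cardinal.card_ord]
    have hWunc : ¬ Countable W := by
      intro h
      have := Cardinal.mk_le_aleph0_iff.mpr h
      rw [hWcard] at this
      exact absurd (lt_of_lt_of_le Cardinal.aleph0_lt_aleph_one this) (lt_irrefl _)
    have hcard : Cardinal.mk {f : L ↪o L // ∀ x, f x ∈ L0 D} ≤ Cardinal.mk W := by
      rw [hWcard]; exact emb_count D hD hDc hunc CH
    obtain ⟨ι⟩ := (Cardinal.le_def _ _).mp hcard
    set e : W → {f : L ↪o L // ∀ x, f x ∈ L0 D} := Function.invFun ι with he'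
    have he : Function.Surjective e := Function.invFun_surjective ι.injective
    -- the recursion step
    have hstep : ∀ (x : W) (prev : ∀ y : W, y < x → L × L), ∃ p : L × L,
        (p.1 ∈ Set.range ((e x).1 : L → L)) ∧ (∀ y (hy : y < x), p.1 ≠ (prev y hy).2) ∧
        p.2 ∈ L0 D ∧ (∀ y (hy : y < x), p.2 ≠ (prev y hy).1) ∧
        (∀ y (hy : y < x), p.2 ≠ (prev y hy).2) ∧ p.2 ≠ p.1 := by
      intro x prev
      have hIio : (Set.Iio x).Countable :=
        (Cardinal.countable_iff_lt_aleph_one _).mpr (Cardinal.mk_Iio_ord_toType x)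
      haveI := hIio.to_subtype
      set Pset : Set (L × L) := Set.range (fun y : (Set.Iio x) => prev y.1 y.2) with hPset
      have hPc : Pset.Countable := Set.countable_range _
      have hPmem : ∀ y (hy : y < x), prev y hy ∈ Pset := fun y hy => ⟨⟨y, hy⟩, rfl⟩
      have ht : ∃ tt, tt ∈ Set.range ((e x).1 : L → L) ∧ tt ∉ Prod.snd '' Pset := by
        by_contra h
        push_neg at h
        exact range_not_countable hunc (e x).1 ((hPc.image Prod.snd).mono h)
      obtain ⟨tt, ht1, ht2⟩ := ht
      have hs : ∃ ss, ss ∈ L0 D ∧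
          ss ∉ (Prod.fst '' Pset ∪ Prod.snd '' Pset ∪ {tt}) := by
        by_contra h
        push_neg at h
        exact L0_uncountable D hD hDc hunc
          ((((hPc.image _).union (hPc.image _)).union (Set.countable_singleton tt)).mono h)
      obtain ⟨ss, hs1, hs2⟩ := hs
      refine ⟨(tt, ss), ht1, ?_, hs1, ?_, ?_, ?_⟩
      · intro y hy hc
        exact ht2 ⟨prev y hy, hPmem y hy, hc.symm⟩
      · intro y hy hc
        exact hs2 (Or.inl (Or.inl ⟨prev y hy, hPmem y hy, hc.symm⟩))
      · intro y hy hc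
        exact hs2 (Or.inl (Or.inr ⟨prev y hy, hPmem y hy, hc.symm⟩))
      · intro hc
        exact hs2 (Or.inr hc)
    set G : W → L × L :=
      WellFounded.fix wellFounded_lt (fun x IH => Classical.choose (hstep x IH)) with hG'
    have hGeq : ∀ x, G x = Classical.choose (hstep x (fun y _ => G y)) := fun x =>
      WellFounded.fix_eq _ _ _
    have hGspec : ∀ x : W,
        ((G x).1 ∈ Set.range ((e x).1 : L → L)) ∧ (∀ y (hy : y < x), (G x).1 ≠ (G y).2) ∧
        (G x).2 ∈ L0 D ∧ (∀ y (hy : y < x), (G x).2 ≠ (G y).1) ∧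
        (∀ y (hy : y < x), (G x).2 ≠ (G y).2) ∧ (G x).2 ≠ (G x).1 := by
      intro x
      have := Classical.choose_spec (hstep x (fun y _ => G y))
      rw [← hGeq x] at this
      exact this
    set s : W → L := fun x => (G x).2 with hs'
    have hsinj : Function.Injective s := by
      intro a b hab
      by_contra hne
      rcases lt_or_gt_of_ne hne with h | h
      · exact (hGspec b).2.2.2.2.1 a h hab.symm
      · exact (hGspec a).2.2.2.2.1 b h hab
    have hts : ∀ x y : W, (G x).1 ≠ s y := by
      intro x y
      rcases lt_trichotomy y x with h | h | h
      · exact (hGspec x).2.1 y h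
      · rw [← h]; exact fun hc => (hGspec y).2.2.2.2.2 hc.symm
      · exact fun hc => (hGspec y).2.2.2.1 x h hc.symm
    refine ⟨Set.range s, ?_, ⟨fun φ => ?_⟩⟩
    · intro hc
      haveI := hc.to_subtype
      have : Countable W := Function.Injective.countable
        (f := fun x : W => (⟨s x, Set.mem_range_self x⟩ : Set.range s))
        (fun a b hab => hsinj (congrArg Subtype.val hab))
      exact hWunc this
    · have hSL0 : ∀ z : Set.range s, (z : L) ∈ L0 D := by
        rintro ⟨z, y, rfl⟩
        exact (hGspec y).2.2.1
      set f' : L ↪o L := φ.trans (OrderEmbedding.subtype _) with hf'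
      obtain ⟨x, hx⟩ := he ⟨f', fun z => hSL0 (φ z)⟩
      have h1 : (G x).1 ∈ Set.range (f' : L → L) := by
        have := (hGspec x).1
        rw [hx] at this
        exact this
      obtain ⟨z, hz⟩ := h1
      have : (G x).1 ∈ Set.range s := by
        rw [← hz]
        exact (φ z).2
      obtain ⟨y, hy⟩ := this
      exact hts x y hy.symm


end Aux

/-- Under CH there is no minimal uncountable separable linear order: every separable
uncountable linear order has an uncountable suborder into which it does not order-embed. -/
theorem no_minimal_separable_of_CH (CH : (2 : Cardinal) ^ Cardinal.aleph0 = Cardinal.aleph 1)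
    (L : Type*) [LinearOrder L] (hsep : SeparableOrder L) (hunc : ¬ Countable L) :
    ∃ S : Set L, ¬ S.Countable ∧ IsEmpty (L ↪o S) := by
  obtain ⟨D, hDc, hD⟩ := hsep
  exact main_aux D hD hDc hunc (CH_transfer CH)
end

section
/- Let S be an uncountable set of countable limit ordinals carrying a ladder system ⟨x_α : α ∈ S⟩, and let B = (S, <_lex) be the associated Baumgartner type. Then every uncountable subset T ⊆ S contains a copy of ω₁ in the induced order: there is an order embedding of (ω₁, <) into (T, <_lex). -/
/-- The first uncountable ordinal, `ω₁`. -/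
noncomputable def ω1 : Ordinal := (Cardinal.aleph 1).ord

/-- `x` is a ladder system on the set `S` of countable limit ordinals: each `α ∈ S` is a
countable limit ordinal and `x α : ℕ → Ordinal` is strictly increasing with range contained
and cofinal in `α`. -/
def IsLadderOn (S : Set Ordinal) (x : Ordinal → ℕ → Ordinal) : Prop :=
  ∀ α ∈ S, α < ω1 ∧ Order.IsSuccLimit α ∧ StrictMono (x α) ∧ (∀ n : ℕ, x α n < α) ∧
    ∀ β < α, ∃ n : ℕ, β < x α n

/-- The lexicographic order associated to a ladder system: `α <lex β` iff at the least `n`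
where `x α` and `x β` differ we have `x α n < x β n`. -/
def LexLt (x : Ordinal → ℕ → Ordinal) (α β : Ordinal) : Prop :=
  ∃ n : ℕ, (∀ m < n, x α m = x β m) ∧ x α n < x β n

/-!
View the ladders of the points of `T` as branches through the tree of finite sequences of
countable ordinals. Some node `t` of height `n` has its successors `x β n` (over the `β ∈ T`
passing through `t`) cofinal in `ω₁`: otherwise, by induction on `n` and because below a fixed
`δ < ω₁` there are only countably many nodes of height `n`, all values `x β m` of ladders of `T`
lie below one countable ordinal, which then bounds `T` itself. Through such a node, choose
`f η` by recursion on `η < ω₁` with `x (f η) n` above all earlier `f ξ`; as `x (f ξ) n < f ξ`,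
the ladders of `f ξ` and `f η` first differ at `n`, in favour of `f η`.
-/

open Ordinal Cardinal Set

theorem omega1_eq_omega_one : ω1 = ω₁ := ord_aleph 1

theorem countable_Iio_of_lt_omega1 {o : Ordinal} (ho : o < ω1) : (Iio o).Countable := by
  rwa [← le_aleph0_iff_set_countable, Cardinal.mk_Iio_ordinal, lift_le_aleph0, ← lt_aleph_one_iff,
    ← lt_ord]

theorem countable_Iic_of_lt_omega1 {o : Ordinal} (ho : o < ω1) : (Iic o).Countable := by
  rw [← Order.Iio_succ]
  exact countable_Iio_of_lt_omega1 ((omega1_eq_omega_one ▸ isSuccLimit_omega 1).succ_lt ho)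

theorem exists_upperBound_lt_omega1 {s : Set Ordinal} (hs : s.Countable) (h : ∀ a ∈ s, a < ω1) :
    ∃ δ < ω1, ∀ a ∈ s, a ≤ δ := by
  have := hs.to_subtype
  refine ⟨⨆ a : s, a.1, ?_, fun a ha => Ordinal.le_iSup (fun a : s => a.1) ⟨a, ha⟩⟩
  rw [omega1_eq_omega_one] at h ⊢
  exact iSup_lt_omega_one fun a => h a a.2

theorem exists_omega1_chain {α : Type*} {r : α → α → Prop} {C : Set α}
    (hC : ∀ s ⊆ C, s.Countable → ∃ c ∈ C, ∀ a ∈ s, r a c) :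
    ∃ f : Ordinal → α, ∀ η < ω1, f η ∈ C ∧ ∀ ξ < η, r (f ξ) (f η) := by
  obtain ⟨c₀, -⟩ := hC ∅ (empty_subset C) countable_empty
  have : Nonempty α := ⟨c₀⟩
  let f : Ordinal → α := Ordinal.lt_wf.fix fun η f =>
    Classical.epsilon fun c => c ∈ C ∧ ∀ ξ (hξ : ξ < η), r (f ξ hξ) c
  have hf (η : Ordinal) : f η = Classical.epsilon fun c => c ∈ C ∧ ∀ ξ < η, r (f ξ) c :=
    Ordinal.lt_wf.fix_eq _ η
  refine ⟨f, fun η => ?_⟩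
  induction η using WellFoundedLT.induction with
  | _ η ih =>
  intro hη
  rw [hf]
  refine Classical.epsilon_spec (p := fun c => c ∈ C ∧ ∀ ξ < η, r (f ξ) c) ?_
  obtain ⟨c, hc, hrc⟩ := hC (f '' Iio η)
    (by rintro _ ⟨ξ, hξ, rfl⟩; exact (ih ξ hξ (hξ.trans hη)).1)
    ((countable_Iio_of_lt_omega1 hη).image f)
  exact ⟨c, hc, fun ξ hξ => hrc _ (mem_image_of_mem f hξ)⟩

section Ladder

variable {S : Set Ordinal} {x : Ordinal → ℕ → Ordinal}

theorem IsLadderOn.lt_omega1 (hx : IsLadderOn S x) {β : Ordinal} (hβ : β ∈ S) : β < ω1 :=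
  (hx β hβ).1

theorem IsLadderOn.lt_self (hx : IsLadderOn S x) {β : Ordinal} (hβ : β ∈ S) (n : ℕ) : x β n < β :=
  (hx β hβ).2.2.2.1 n

theorem IsLadderOn.le_of_forall_le (hx : IsLadderOn S x) {β δ : Ordinal} (hβ : β ∈ S)
    (h : ∀ n, x β n ≤ δ) : β ≤ δ := by
  by_contra! hδβ
  obtain ⟨n, hn⟩ := (hx β hβ).2.2.2.2 δ hδβ
  exact (h n).not_gt hn

def ladderCone (x : Ordinal → ℕ → Ordinal) (A : Set Ordinal) {n : ℕ} (t : Fin n → Ordinal) :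
    Set Ordinal :=
  {β ∈ A | ∀ i : Fin n, x β i = t i}

def IsCofinalNode (x : Ordinal → ℕ → Ordinal) (A : Set Ordinal) {n : ℕ} (t : Fin n → Ordinal) :
    Prop :=
  ∀ γ < ω1, ∃ β ∈ ladderCone x A t, γ < x β n

variable {A : Set Ordinal}

theorem exists_ladder_bound_succ {n : ℕ} {δ : Ordinal} (hδ : δ < ω1)
    (hA : ∀ β ∈ A, ∀ m < n, x β m ≤ δ) (hnode : ∀ t : Fin n → Ordinal, ¬ IsCofinalNode x A t) :
    ∃ δ' < ω1, ∀ β ∈ A, ∀ m < n + 1, x β m ≤ δ' := by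
  simp only [IsCofinalNode, not_forall, not_exists, not_and, not_lt, exists_prop] at hnode
  choose g hg hgA using hnode
  let stem (β : Ordinal) : Fin n → Ordinal := fun i => x β i
  have hstems : (stem '' A).Countable :=
    (countable_pi fun _ => countable_Iic_of_lt_omega1 hδ).mono <| by
      rintro _ ⟨β, hβ, rfl⟩ i
      exact hA β hβ i i.2
  obtain ⟨ε, hε, hεbound⟩ := exists_upperBound_lt_omega1 ((hstems.image g).insert δ) <| by
    rintro _ (rfl | ⟨t, -, rfl⟩)
    exacts [hδ, hg t]
  refine ⟨ε, hε, fun β hβ m hm => ?_⟩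
  rcases Nat.lt_succ_iff_lt_or_eq.1 hm with hm | rfl
  · exact (hA β hβ m hm).trans (hεbound δ (mem_insert δ _))
  · exact (hgA (stem β) β ⟨hβ, fun i => rfl⟩).trans
      (hεbound _ (mem_insert_of_mem δ ⟨stem β, mem_image_of_mem stem hβ, rfl⟩))

theorem exists_isCofinalNode (hx : IsLadderOn S x) (hAS : A ⊆ S) (hA : ¬ A.Countable) :
    ∃ n, ∃ t : Fin n → Ordinal, IsCofinalNode x A t := by
  by_contra! hnode
  have hlevel (n : ℕ) : ∃ δ < ω1, ∀ β ∈ A, ∀ m < n, x β m ≤ δ := by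
    induction n with
    | zero => exact ⟨0, omega1_eq_omega_one ▸ omega_pos 1, by simp⟩
    | succ n ih =>
      obtain ⟨δ, hδ, hAδ⟩ := ih
      exact exists_ladder_bound_succ hδ hAδ (hnode n)
  choose δ hδ hAδ using hlevel
  obtain ⟨ε, hε, hδε⟩ := exists_upperBound_lt_omega1 (countable_range δ) (forall_mem_range.2 hδ)
  refine hA ((countable_Iic_of_lt_omega1 hε).mono fun β hβ => ?_)
  exact hx.le_of_forall_le (hAS hβ) fun m =>
    (hAδ (m + 1) β hβ m m.lt_succ_self).trans (hδε _ (mem_range_self (m + 1)))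

theorem IsCofinalNode.exists_ladder_gt (hx : IsLadderOn S x) (hAS : A ⊆ S) {n : ℕ}
    {t : Fin n → Ordinal} (ht : IsCofinalNode x A t) {s : Set Ordinal}
    (hs : s ⊆ ladderCone x A t) (hsc : s.Countable) :
    ∃ β' ∈ ladderCone x A t, ∀ β ∈ s, β < x β' n := by
  obtain ⟨δ, hδ, hsδ⟩ := exists_upperBound_lt_omega1 hsc fun β hβ => hx.lt_omega1 (hAS (hs hβ).1)
  obtain ⟨β', hβ', hδβ'⟩ := ht δ hδ
  exact ⟨β', hβ', fun β hβ => (hsδ β hβ).trans_lt hδβ'⟩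

end Ladder

theorem baumgartner_contains_omega1_general (S : Set Ordinal) (x : Ordinal → ℕ → Ordinal)
    (hx : IsLadderOn S x)
    (T : Set Ordinal) (hTS : T ⊆ S) (hT : ¬ T.Countable) :
    ∃ f : Ordinal → Ordinal, (∀ ξ < ω1, f ξ ∈ T) ∧
      ∀ ξ η : Ordinal, ξ < ω1 → η < ω1 → ξ < η → LexLt x (f ξ) (f η) := by
  obtain ⟨n, t, ht⟩ := exists_isCofinalNode hx hTS hT
  obtain ⟨f, hf⟩ := exists_omega1_chain (r := fun β β' => β < x β' n)
    fun s hs hsc => ht.exists_ladder_gt hx hTS hs hsc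
  refine ⟨f, fun ξ hξ => (hf ξ hξ).1.1, fun ξ η hξ hη hξη => ⟨n, fun m hm => ?_, ?_⟩⟩
  · rw [(hf ξ hξ).1.2 ⟨m, hm⟩, (hf η hη).1.2 ⟨m, hm⟩]
  · exact (hx.lt_self (hTS (hf ξ hξ).1.1) n).trans ((hf η hη).2 ξ hξη)

/-- Every uncountable subset of a Baumgartner type contains a copy of `ω₁`. -/
theorem baumgartner_contains_omega1 (S : Set Ordinal) (x : Ordinal → ℕ → Ordinal)
    (hS : ¬ S.Countable) (hx : IsLadderOn S x)
    (T : Set Ordinal) (hTS : T ⊆ S) (hT : ¬ T.Countable) :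
    ∃ f : Ordinal → Ordinal, (∀ ξ < ω1, f ξ ∈ T) ∧
      ∀ ξ η : Ordinal, ξ < ω1 → η < ω1 → ξ < η → LexLt x (f ξ) (f η) :=
  baumgartner_contains_omega1_general S x hx T hTS hT
end

section
/- Let S be an uncountable set of countable limit ordinals carrying a ladder system ⟨x_α : α ∈ S⟩. Then no suborder of the Baumgartner type (S, <_lex) is an Aronszajn line; indeed, every uncountable T ⊆ S contains an uncountable subset which is scattered in the order induced by <_lex. -/
/-- A set `A` is scattered with respect to the relation `r` if there is no map of `ℚ`
into `A` which is strictly increasing from `<` to `r`. -/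
def RelScatteredOn (r : Ordinal → Ordinal → Prop) (A : Set Ordinal) : Prop :=
  ¬ ∃ f : ℚ → Ordinal, (∀ q : ℚ, f q ∈ A) ∧ ∀ p q : ℚ, p < q → r (f p) (f q)

open Set

theorem Set.countable_of_forall_lt_exists_mem_Ico {α : Type*} [ConditionallyCompleteLinearOrder α]
    [WellFoundedLT α] {C T : Set α} (hC : C.Countable)
    (hT : ∀ a ∈ T, ∀ b ∈ T, a < b → ∃ c ∈ C, c ∈ Ico a b) : T.Countable := by
  set T' := T ∩ {b | (C ∩ Ici b).Nonempty}
  have hrest : (T \ {b | (C ∩ Ici b).Nonempty}).Subsingleton := by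
    intro a ha b hb
    by_contra hab
    wlog hlt : a < b generalizing a b
    · exact this hb ha (Ne.symm hab) ((Ne.symm hab).lt_of_le (not_lt.1 hlt))
    obtain ⟨c, hc, hac, -⟩ := hT a ha.1 b hb.1 hlt
    exact ha.2 ⟨c, hc, hac⟩
  have hmono : StrictMonoOn (fun b => sInf (C ∩ Ici b)) T' := by
    intro a ha b hb hlt
    obtain ⟨c, hc, hac, hcb⟩ := hT a ha.1 b hb.1 hlt
    have hleast := isLeast_csInf (s := C ∩ Ici a) ⟨c, hc, hac⟩
    exact (hleast.2 ⟨hc, hac⟩).trans_lt (hcb.trans_le (csInf_mem hb.2).2)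
  have hT' : T'.Countable :=
    MapsTo.countable_of_injOn (fun b hb => (csInf_mem hb.2).1) hmono.injOn hC
  rw [← inter_union_sdiff T {b | (C ∩ Ici b).Nonempty}]
  exact hT'.union hrest.countable

theorem Stream'.get_eq_of_take_eq {α : Type*} {a b : Stream' α} {n m : ℕ}
    (h : a.take n = b.take n) (hm : m < n) : a.get m = b.get m := by
  simpa [hm] using congrArg (·[m]?) h

section Tree

variable {ι α : Type*} {f : ι → ℕ → α} {T : Set ι}

def childLabels (f : ι → ℕ → α) (T : Set ι) (n : ℕ) (p : List α) : Set α :=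
  (f · n) '' {i ∈ T | Stream'.take n (f i) = p}

theorem countable_image_take
    (h : ∀ n p, (childLabels f T n p).Countable) (n : ℕ) :
    ((fun i => Stream'.take n (f i)) '' T).Countable := by
  induction n with
  | zero => exact (countable_singleton []).mono (by rintro _ ⟨i, -, rfl⟩; rfl)
  | succ n ih =>
    refine (ih.biUnion fun p _ => (h n p).image (p ++ [·])).mono ?_
    rintro _ ⟨i, hi, rfl⟩
    exact mem_biUnion ⟨i, hi, rfl⟩ ⟨f i n, ⟨i, ⟨hi, rfl⟩, rfl⟩, Stream'.take_succ' n |>.symm⟩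

theorem countable_iUnion_image_apply
    (h : ∀ n p, (childLabels f T n p).Countable) :
    (⋃ n, (f · n) '' T).Countable := by
  refine countable_iUnion fun n => ((countable_image_take h n).biUnion fun p _ => h n p).mono ?_
  rintro _ ⟨i, hi, rfl⟩
  exact mem_biUnion ⟨i, hi, rfl⟩ ⟨i, ⟨hi, rfl⟩, rfl⟩

end Tree

section Ladder

variable {x : Ordinal → ℕ → Ordinal}

theorem LexLt.irrefl (α : Ordinal) : ¬ LexLt x α α := fun ⟨_, _, h⟩ => h.false

theorem LexLt.apply_lt_of_agree_of_ne {α β : Ordinal} {n : ℕ} (h : LexLt x α β)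
    (hagree : ∀ m < n, x α m = x β m) (hne : x α n ≠ x β n) : x α n < x β n := by
  obtain ⟨k, hk, hlt⟩ := h
  obtain hkn | rfl | hnk := lt_trichotomy k n
  · exact absurd (hagree k hkn) hlt.ne
  · exact hlt
  · exact absurd (hk n hnk) hne

theorem relScatteredOn_lexLt_of_injOn {A : Set Ordinal} {n : ℕ}
    (hagree : ∀ α ∈ A, ∀ β ∈ A, ∀ m < n, x α m = x β m) (hinj : InjOn (x · n) A) :
    RelScatteredOn (LexLt x) A := by
  rintro ⟨F, hFA, hF⟩
  have hmono : StrictMono fun q => x (F q) n := fun p q hpq =>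
    (hF p q hpq).apply_lt_of_agree_of_ne (hagree _ (hFA p) _ (hFA q)) fun he =>
      LexLt.irrefl (F q) (hinj (hFA p) (hFA q) he ▸ hF p q hpq)
  have := hmono.wellFoundedLT
  obtain ⟨q, -, hq⟩ := (wellFounded_lt (α := ℚ)).has_min univ ⟨0, trivial⟩
  exact hq (q - 1) trivial (sub_one_lt q)

theorem exists_uncountable_relScatteredOn_lexLt {T : Set Ordinal} {n : ℕ} {p : List Ordinal}
    (h : ¬ (childLabels x T n p).Countable) :
    ∃ U ⊆ T, ¬ U.Countable ∧ RelScatteredOn (LexLt x) U := by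
  obtain ⟨U, hU, hbij⟩ := exists_subset_bijOn {β ∈ T | Stream'.take n (x β) = p} (x · n)
  refine ⟨U, fun β hβ => (hU hβ).1, fun hUc => h ?_, ?_⟩
  · rw [childLabels, ← hbij.image_eq]
    exact hUc.image _
  · refine relScatteredOn_lexLt_of_injOn (fun α hα β hβ m hm => ?_) hbij.injOn
    exact Stream'.get_eq_of_take_eq ((hU hα).2.trans (hU hβ).2.symm) hm

theorem IsLadderOn.countable {S T : Set Ordinal}
    (hx : IsLadderOn S x) (hTS : T ⊆ S)
    (h : ∀ n p, (childLabels x T n p).Countable) : T.Countable := by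
  refine countable_of_forall_lt_exists_mem_Ico (countable_iUnion_image_apply h) ?_
  intro α _ β hβ hαβ
  obtain ⟨-, -, -, hbelow, hcofinal⟩ := hx β (hTS hβ)
  obtain ⟨n, hn⟩ := hcofinal α hαβ
  exact ⟨x β n, mem_iUnion.2 ⟨n, β, hβ, rfl⟩, hn.le, hbelow n⟩

end Ladder

theorem baumgartner_no_aronszajn_general (S : Set Ordinal) (x : Ordinal → ℕ → Ordinal)
    (hx : IsLadderOn S x)
    (T : Set Ordinal) (hTS : T ⊆ S) (hT : ¬ T.Countable) :
    ∃ U ⊆ T, ¬ U.Countable ∧ RelScatteredOn (LexLt x) U := by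
  by_cases hsmall : ∀ n p, (childLabels x T n p).Countable
  · exact absurd (hx.countable hTS hsmall) hT
  · push Not at hsmall
    obtain ⟨n, p, hbig⟩ := hsmall
    exact exists_uncountable_relScatteredOn_lexLt hbig

/-- No suborder of a Baumgartner type is an Aronszajn line: every uncountable subset of `S`
contains an uncountable subset which is scattered in the induced lexicographic order. -/
theorem baumgartner_no_aronszajn (S : Set Ordinal) (x : Ordinal → ℕ → Ordinal)
    (hS : ¬ S.Countable) (hx : IsLadderOn S x)
    (T : Set Ordinal) (hTS : T ⊆ S) (hT : ¬ T.Countable) :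
    ∃ U ⊆ T, ¬ U.Countable ∧ RelScatteredOn (LexLt x) U :=
  baumgartner_no_aronszajn_general S x hx T hTS hT
end

section
/- Fix a ladder system ⟨x_ξ : ξ ∈ lim(ω₁)⟩ on the set of all countable limit ordinals. If S is a nonstationary set of countable limit ordinals, then for every r ∈ 2^ℕ the linear order (S, <_r) is σ-scattered. -/
/-- `x` is a ladder system on the set of all countable limit ordinals: for each countable
limit ordinal `ξ`, `x ξ : ℕ → Ordinal` is strictly increasing with range contained and
cofinal in `ξ`. -/
def IsLadderSystem (x : Ordinal → ℕ → Ordinal) : Prop :=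
  ∀ ξ : Ordinal, ξ < ω1 → Order.IsSuccLimit ξ →
    StrictMono (x ξ) ∧ (∀ n : ℕ, x ξ n < ξ) ∧ ∀ β < ξ, ∃ n : ℕ, β < x ξ n

/-- The linear order `<_r` determined by `r ∈ 2^ℕ`: `ξ <_r η` iff at the least `n` where
`x ξ` and `x η` differ, `x ξ n < x η n` is equivalent to `r n = 0` (here `0` is `false`). -/
def RLt (x : Ordinal → ℕ → Ordinal) (r : ℕ → Bool) (ξ η : Ordinal) : Prop :=
  ∃ n : ℕ, (∀ m < n, x ξ m = x η m) ∧ x ξ n ≠ x η n ∧ (x ξ n < x η n ↔ r n = false)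

/-- `C` is a club subset of `ω₁`: a set of countable ordinals which is unbounded in `ω₁`
and contains the supremum of each of its nonempty bounded subsets. -/
def IsClubIn (C : Set Ordinal) : Prop :=
  C ⊆ Set.Iio ω1 ∧ (∀ β < ω1, ∃ γ ∈ C, β < γ) ∧
    ∀ D ⊆ C, D.Nonempty → (∃ β < ω1, ∀ γ ∈ D, γ ≤ β) → sSup D ∈ C

/-- `S` is a stationary subset of `ω₁`: it meets every club subset of `ω₁`. -/
def IsStat (S : Set Ordinal) : Prop := ∀ C : Set Ordinal, IsClubIn C → (S ∩ C).Nonempty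

/-- `(S, r)` is σ-scattered: `S` is a countable union of subsets, each scattered
with respect to `r`. -/
def RelSigmaScatteredOn (r : Ordinal → Ordinal → Prop) (S : Set Ordinal) : Prop :=
  ∃ A : ℕ → Set Ordinal, (⋃ n, A n) = S ∧ ∀ n : ℕ, RelScatteredOn r (A n)
/-!
A club `C` disjoint from `S` sends each `ξ ∈ S` to `γ ξ = sup (C ∩ ξ) < ξ`. The fibres of `γ` are
countable, and if `ξ < η` lie in different fibres then `ξ ≤ γ η`. Hence `S` splits into countably
many pieces on which `γ` is injective and the ladders pass their `γ` at one fixed level `n`; on such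
a piece `x ξ n < ξ ≤ γ η < x η n` for `ξ < η`, so any two ladders differ by level `n`. A
lexicographic order on sequences from a well-order, twisted at each coordinate and with all
first differences below a fixed level, admits no copy of `ℚ`: the first coordinate of such a copy
is monotone or antitone into a well-order, hence constant on a subinterval, and one recurses on
the tail.
-/

open Set

section TwistedLex

variable {α β : Type*} [LinearOrder α] [LinearOrder β]

/-- `RLt x r ξ η` unfolds to `∃ m, TwistedLexAt r (x ξ) (x η) m`. -/
def TwistedLexAt (s : ℕ → Bool) (u v : ℕ → α) (m : ℕ) : Prop :=
  (∀ k < m, u k = v k) ∧ u m ≠ v m ∧ (u m < v m ↔ s m = false)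

namespace TwistedLexAt

variable {s : ℕ → Bool} {u v : ℕ → α} {m : ℕ}

theorem head_le (h : TwistedLexAt s u v m) (hs : s 0 = false) : u 0 ≤ v 0 := by
  rcases m with _ | m
  · exact (h.2.2.2 hs).le
  · exact (h.1 0 m.succ_pos).le

theorem head_ge (h : TwistedLexAt s u v m) (hs : s 0 = true) : v 0 ≤ u 0 := by
  rcases m with _ | m
  · exact not_lt.1 fun hlt => absurd (h.2.2.1 hlt) (by simp [hs])
  · exact (h.1 0 m.succ_pos).ge

theorem tail (h : TwistedLexAt s u v (m + 1)) :
    TwistedLexAt (fun k => s (k + 1)) (fun k => u (k + 1)) (fun k => v (k + 1)) m :=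
  ⟨fun k hk => h.1 (k + 1) (by omega), h.2.1, h.2.2⟩

end TwistedLexAt

theorem monotoneOn_or_antitoneOn_head {s : ℕ → Bool} {y : β → ℕ → α} {I : Set β}
    (h : ∀ p ∈ I, ∀ q ∈ I, p < q → ∃ m, TwistedLexAt s (y p) (y q) m) :
    MonotoneOn (y · 0) I ∨ AntitoneOn (y · 0) I := by
  cases hs : s 0
  · refine .inl fun p hp q hq hpq => ?_
    rcases hpq.eq_or_lt with rfl | hlt
    · rfl
    · exact (h p hp q hq hlt).elim fun _ hm => hm.head_le hs
  · refine .inr fun p hp q hq hpq => ?_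
    rcases hpq.eq_or_lt with rfl | hlt
    · rfl
    · exact (h p hp q hq hlt).elim fun _ hm => hm.head_ge hs

/-- The minimum of `g` on `Ioo a b` is attained at some `p₀`, and monotonicity pins `g` to that
minimum on `Ioo a p₀` (antitonicity on `Ioo p₀ b`). -/
theorem exists_Ioo_subset_forall_eq [WellFoundedLT α] [DenselyOrdered β] {g : β → α} {a b : β}
    (hab : a < b) (hg : MonotoneOn g (Ioo a b) ∨ AntitoneOn g (Ioo a b)) :
    ∃ a' b', a' < b' ∧ Ioo a' b' ⊆ Ioo a b ∧ ∃ c, ∀ p ∈ Ioo a' b', g p = c := by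
  obtain ⟨p, hp⟩ := nonempty_Ioo.2 hab
  set p₀ := Function.argminOn g (Ioo a b) ⟨p, hp⟩
  have hp₀ : p₀ ∈ Ioo a b := Function.argminOn_mem g _ _
  have hmin : ∀ q ∈ Ioo a b, g p₀ ≤ g q := fun q hq => Function.argminOn_le g _ hq
  rcases hg with hg | hg
  · refine ⟨a, p₀, hp₀.1, Ioo_subset_Ioo_right hp₀.2.le, g p₀, fun q hq => ?_⟩
    have hq' : q ∈ Ioo a b := ⟨hq.1, hq.2.trans hp₀.2⟩
    exact le_antisymm (hg hq' hp₀ hq.2.le) (hmin q hq')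
  · refine ⟨p₀, b, hp₀.2, Ioo_subset_Ioo_left hp₀.1.le, g p₀, fun q hq => ?_⟩
    have hq' : q ∈ Ioo a b := ⟨hp₀.1.trans hq.1, hq.2⟩
    exact le_antisymm (hg hp₀ hq' hq.1.le) (hmin q hq')

theorem not_forall_exists_lt_twistedLexAt [WellFoundedLT α] [DenselyOrdered β] (n : ℕ)
    (s : ℕ → Bool) (y : β → ℕ → α) {a b : β} (hab : a < b) :
    ¬ ∀ p ∈ Ioo a b, ∀ q ∈ Ioo a b, p < q → ∃ m < n, TwistedLexAt s (y p) (y q) m := by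
  induction n generalizing s y a b with
  | zero =>
    obtain ⟨p, hap, hpb⟩ := exists_between hab
    obtain ⟨q, hpq, hqb⟩ := exists_between hpb
    intro h
    obtain ⟨m, hm, -⟩ := h p ⟨hap, hpq.trans hqb⟩ q ⟨hap.trans hpq, hqb⟩ hpq
    exact m.not_lt_zero hm
  | succ n ih =>
    intro h
    obtain ⟨a', b', hab', hsub, c, hc⟩ := exists_Ioo_subset_forall_eq hab
      (monotoneOn_or_antitoneOn_head fun p hp q hq hpq => (h p hp q hq hpq).imp fun _ hm => hm.2)
    refine ih (fun k => s (k + 1)) (fun p k => y p (k + 1)) hab' fun p hp q hq hpq => ?_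
    obtain ⟨_ | m, hm, hlex⟩ := h p (hsub hp) q (hsub hq) hpq
    · exact absurd ((hc p hp).trans (hc q hq).symm) hlex.2.1
    · exact ⟨m, by omega, hlex.tail⟩

end TwistedLex

theorem relScatteredOn_rLt_of_injOn (x : Ordinal → ℕ → Ordinal) (r : ℕ → Bool) {A : Set Ordinal}
    (n : ℕ) (h : InjOn (fun ξ => x ξ n) A) : RelScatteredOn (RLt x r) A := by
  rintro ⟨f, hfA, hf⟩
  refine not_forall_exists_lt_twistedLexAt (n + 1) r (fun q => x (f q)) (zero_lt_one' ℚ)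
    fun p _ q _ hpq => ?_
  obtain ⟨m, hm⟩ := hf p q hpq
  refine ⟨m, Nat.lt_succ_of_le (not_lt.1 fun hnm => hm.2.1 ?_), hm⟩
  rw [h (hfA p) (hfA q) (hm.1 n hnm)]

theorem relSigmaScatteredOn_of_iUnion_eq {ι : Type*} [Countable ι] [Nonempty ι]
    {r : Ordinal → Ordinal → Prop} {S : Set Ordinal} (A : ι → Set Ordinal) (hAS : ⋃ i, A i = S)
    (hA : ∀ i, RelScatteredOn r (A i)) : RelSigmaScatteredOn r S := by
  obtain ⟨e, he⟩ := exists_surjective_nat ι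
  exact ⟨A ∘ e, (he.iUnion_comp A).trans hAS, fun n => hA (e n)⟩

theorem exists_iUnion_eq_injOn_of_countable_fibers {α γ : Type*} {S : Set α} {f : α → γ}
    (h : ∀ c, {a ∈ S | f a = c}.Countable) :
    ∃ A : ℕ → Set α, ⋃ k, A k = S ∧ ∀ k, InjOn f (A k) := by
  choose e he using fun c => countable_iff_exists_injOn.1 (h c)
  refine ⟨fun k => {a ∈ S | e (f a) a = k}, ?_, fun k a ha b hb hab => ?_⟩
  · ext a
    simp only [mem_iUnion]
    exact ⟨fun ⟨_, ha, _⟩ => ha, fun ha => ⟨_, ha, rfl⟩⟩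
  · refine he (f a) ⟨ha.1, rfl⟩ ⟨hb.1, hab.symm⟩ ?_
    rw [ha.2, hab, hb.2]

theorem countable_Iio_of_lt_ω1 {c : Ordinal} (hc : c < ω1) : (Iio c).Countable := by
  rw [← Cardinal.le_aleph0_iff_set_countable, Cardinal.mk_Iio_ordinal, Cardinal.lift_le_aleph0,
    ← Cardinal.lt_aleph_one_iff]
  exact Cardinal.lt_ord.1 hc

section SupBelow

/-- This is `0` when `C ∩ Iio ξ` is empty. -/
noncomputable def supBelow (C : Set Ordinal) (ξ : Ordinal) : Ordinal := sSup (C ∩ Iio ξ)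

variable {C : Set Ordinal} {ξ η : Ordinal}

theorem le_supBelow {c : Ordinal} (hc : c ∈ C) (hcξ : c < ξ) : c ≤ supBelow C ξ :=
  le_csSup ⟨ξ, fun _ hd => hd.2.le⟩ ⟨hc, hcξ⟩

theorem supBelow_le (C : Set Ordinal) (ξ : Ordinal) : supBelow C ξ ≤ ξ :=
  csSup_le' fun _ hc => hc.2.le

theorem supBelow_lt (hC : IsClubIn C) (hξ : ξ < ω1) (hξ0 : ξ ≠ 0) (hξC : ξ ∉ C) :
    supBelow C ξ < ξ := by
  refine (supBelow_le C ξ).lt_of_ne fun h => ?_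
  rcases (C ∩ Iio ξ).eq_empty_or_nonempty with hempty | hne
  · exact hξ0 (by rw [← h, supBelow, hempty, csSup_empty]; rfl)
  · exact hξC (h ▸ hC.2.2 _ inter_subset_left hne ⟨ξ, hξ, fun _ hc => hc.2.le⟩)

theorem le_supBelow_of_lt_of_ne (hξη : ξ < η) (hne : supBelow C ξ ≠ supBelow C η) :
    ξ ≤ supBelow C η := by
  refine not_lt.1 fun hlt => hne (congrArg sSup (ext fun c => ?_))
  exact ⟨fun hc => ⟨hc.1, hc.2.trans hξη⟩, fun hc => ⟨hc.1, (le_supBelow hc.1 hc.2).trans_lt hlt⟩⟩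

theorem countable_setOf_supBelow_eq {S : Set Ordinal} (hC : IsClubIn C) (hS : S ⊆ Iio ω1)
    (hSC : Disjoint S C) (γ : Ordinal) : {ξ ∈ S | supBelow C ξ = γ}.Countable := by
  by_cases hγ : γ < ω1
  · obtain ⟨c, hc, hγc⟩ := hC.2.1 γ hγ
    refine (countable_Iio_of_lt_ω1 (hC.1 hc)).mono fun ξ ⟨hξS, hξγ⟩ => ?_
    have hξc : ξ ≠ c := fun h => hSC.notMem_of_mem_left hξS (h ▸ hc)
    exact hξc.lt_of_le (not_lt.1 fun hcξ => (le_supBelow hc hcξ).not_gt (hξγ ▸ hγc))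
  · convert countable_empty
    refine eq_empty_of_forall_notMem fun ξ ⟨hξS, hξγ⟩ => hγ ?_
    exact hξγ ▸ (supBelow_le C ξ).trans_lt (hS hξS)

end SupBelow

/-- If `S` is a nonstationary set of countable limit ordinals, then `(S, <_r)` is
σ-scattered for every `r` in Cantor space. -/
theorem nonstationary_sigma_scattered (x : Ordinal → ℕ → Ordinal)
    (hx : IsLadderSystem x) (S : Set Ordinal)
    (hSsub : ∀ α ∈ S, α < ω1 ∧ Order.IsSuccLimit α) (hS : ¬ IsStat S) (r : ℕ → Bool) :
    RelSigmaScatteredOn (RLt x r) S := by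
  obtain ⟨C, hC, hSC⟩ : ∃ C, IsClubIn C ∧ Disjoint S C := by
    simpa [IsStat, not_nonempty_iff_eq_empty, disjoint_iff_inter_eq_empty] using hS
  have hγ : ∀ ξ ∈ S, supBelow C ξ < ξ := fun ξ hξ =>
    supBelow_lt hC (hSsub ξ hξ).1 (hSsub ξ hξ).2.ne_bot (hSC.notMem_of_mem_left hξ)
  choose! level hlevel using fun ξ hξ =>
    (hx ξ (hSsub ξ hξ).1 (hSsub ξ hξ).2).2.2 _ (hγ ξ hξ)
  obtain ⟨A, hAS, hAinj⟩ := exists_iUnion_eq_injOn_of_countable_fibers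
    (countable_setOf_supBelow_eq hC (fun ξ hξ => (hSsub ξ hξ).1) hSC)
  refine relSigmaScatteredOn_of_iUnion_eq (fun i : ℕ × ℕ => A i.2 ∩ level ⁻¹' {i.1}) ?_
    fun ⟨n, k⟩ => relScatteredOn_rLt_of_injOn x r n (StrictMonoOn.injOn fun ξ hξ η hη hξη => ?_)
  · ext ξ
    simp only [mem_iUnion, mem_inter_iff, mem_preimage, mem_singleton_iff, Prod.exists, ← hAS]
    exact ⟨fun ⟨_, k, hk, _⟩ => ⟨k, hk⟩, fun ⟨k, hk⟩ => ⟨_, k, hk, rfl⟩⟩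
  have hξS : ξ ∈ S := hAS ▸ mem_iUnion_of_mem k hξ.1
  have hηS : η ∈ S := hAS ▸ mem_iUnion_of_mem k hη.1
  calc x ξ n < ξ := (hx ξ (hSsub ξ hξS).1 (hSsub ξ hξS).2).2.1 n
    _ ≤ supBelow C η := le_supBelow_of_lt_of_ne hξη fun h => hξη.ne (hAinj k hξ.1 hη.1 h)
    _ < x η n := by rw [← show level η = n from hη.2]; exact hlevel η hηS
end
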